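/- arXiv:1803.06073 — 4 statements merged into one kernel-verified Lean document; each statement's English description precedes it below -/
import Mathlib

section
/- Let f : ℝ^d → ℝ be differentiable, L-smooth and μ-strongly convex with 0 < μ ≤ L. Then for all x, y ∈ ℝ^d, whenever μ < L, f(x) ≥ f(y) + ⟨∇f(y), x − y⟩ + (1/(2(L−μ)))(‖∇f(x) − ∇f(y)‖² + μL‖x − y‖² − 2μ⟨∇f(x) − ∇f(y), x − y⟩). -/
open scoped RealInnerProductSpace

section Aux

variable {E : Type*} [NormedAddCommGroup E] [InnerProductSpace ℝ E] [CompleteSpace E]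

lemma convex_grad_lower (g : E → ℝ) (hg : ConvexOn ℝ Set.univ g) {y gy : E}
    (hgy : HasGradientAt g gy y) (x : E) : g y + ⟪gy, x - y⟫ ≤ g x := by
  set v := x - y with hv
  have hcurve : ∀ t : ℝ, HasDerivAt (fun t : ℝ => y + t • v) v t := by
    intro t
    simpa using ((hasDerivAt_id t).smul_const v).const_add y
  have hψ : HasDerivAt (fun t : ℝ => g (y + t • v)) ⟪gy, v⟫ 0 := by
    have hfd := hasGradientAt_iff_hasFDerivAt.1 hgy
    have h0 : y = y + (0:ℝ) • v := by simp
    rw [h0] at hfd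
    have := hfd.comp_hasDerivAt (0:ℝ) (hcurve 0)
    simp only [InnerProductSpace.toDual_apply_apply] at this
    exact this
  have hψconv : ConvexOn ℝ Set.univ (fun t : ℝ => g (y + t • v)) := by
    refine ⟨convex_univ, ?_⟩
    intro s _ t _ a b ha hb hab
    have hb1 : b = 1 - a := by linarith
    have key : y + (a • s + b • t) • v = a • (y + s • v) + b • (y + t • v) := by
      rw [smul_eq_mul, smul_eq_mul, hb1]
      module
    show g (y + (a • s + b • t) • v) ≤ a • g (y + s • v) + b • g (y + t • v)
    rw [key]
    exact hg.2 (Set.mem_univ _) (Set.mem_univ _) ha hb hab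
  have hs := hψconv.le_slope_of_hasDerivAt (Set.mem_univ (0:ℝ)) (Set.mem_univ (1:ℝ)) one_pos hψ
  rw [slope_def_field] at hs
  simp only [one_smul, zero_smul, add_zero, div_one, sub_zero] at hs
  have hx : y + v = x := by rw [hv]; abel
  rw [hx] at hs
  linarith [hs]

lemma descent_lemma (g : E → ℝ) (g' : E → E) (hg : ∀ x, HasGradientAt g (g' x) x)
    {K : ℝ} (hlip : ∀ x y, ‖g' x - g' y‖ ≤ K * ‖x - y‖) (a b : E) :
    g b ≤ g a + ⟪g' a, b - a⟫ + K / 2 * ‖b - a‖ ^ 2 := by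
  set v := b - a with hv
  have hcurve : ∀ t : ℝ, HasDerivAt (fun t : ℝ => a + t • v) v t := by
    intro t
    simpa using ((hasDerivAt_id t).smul_const v).const_add a
  have hψ : ∀ t : ℝ, HasDerivAt (fun t : ℝ => g (a + t • v)) ⟪g' (a + t • v), v⟫ t := by
    intro t
    have hfd := hasGradientAt_iff_hasFDerivAt.1 (hg (a + t • v))
    have := hfd.comp_hasDerivAt t (hcurve t)
    simp only [InnerProductSpace.toDual_apply_apply] at this
    exact this
  have hcontg' : Continuous g' := by
    have : LipschitzWith (Real.toNNReal K) g' := by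
      apply LipschitzWith.of_dist_le_mul
      intro x y
      rw [dist_eq_norm, dist_eq_norm]
      calc ‖g' x - g' y‖ ≤ K * ‖x - y‖ := hlip x y
        _ ≤ Real.toNNReal K * ‖x - y‖ := by
            gcongr
            exact (Real.le_coe_toNNReal K)
    exact this.continuous
  have hcontψ' : Continuous fun t : ℝ => ⟪g' (a + t • v), v⟫ := by
    exact (Continuous.inner (hcontg'.comp (by continuity)) continuous_const)
  have hftc : ∫ t in (0:ℝ)..1, ⟪g' (a + t • v), v⟫ = g (a + (1:ℝ) • v) - g (a + (0:ℝ) • v) := by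
    exact intervalIntegral.integral_eq_sub_of_hasDerivAt (fun t _ => hψ t)
      (hcontψ'.intervalIntegrable 0 1)
  have hmono : ∫ t in (0:ℝ)..1, ⟪g' (a + t • v), v⟫ ≤
      ∫ t in (0:ℝ)..1, (⟪g' a, v⟫ + K * ‖v‖ ^ 2 * t) := by
    apply intervalIntegral.integral_mono_on (by norm_num)
      (hcontψ'.intervalIntegrable 0 1)
      ((continuous_const.add (continuous_const.mul continuous_id)).intervalIntegrable 0 1)
    intro t ht
    have h1 : ⟪g' (a + t • v), v⟫ - ⟪g' a, v⟫ = ⟪g' (a + t • v) - g' a, v⟫ := by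
      rw [inner_sub_left]
    have h2 : ⟪g' (a + t • v) - g' a, v⟫ ≤ ‖g' (a + t • v) - g' a‖ * ‖v‖ :=
      real_inner_le_norm _ _
    have h3 : ‖g' (a + t • v) - g' a‖ ≤ K * (t * ‖v‖) := by
      have := hlip (a + t • v) a
      simpa [norm_smul, abs_of_nonneg ht.1] using this
    simp only [Pi.add_apply, Pi.mul_apply, id_eq]
    nlinarith [norm_nonneg v, ht.1]
  have hrhs : ∫ t in (0:ℝ)..1, (⟪g' a, v⟫ + K * ‖v‖ ^ 2 * t) =
      ⟪g' a, v⟫ + K / 2 * ‖v‖ ^ 2 := by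
    rw [intervalIntegral.integral_add intervalIntegrable_const
      ((intervalIntegral.intervalIntegrable_id).const_mul _)]
    rw [intervalIntegral.integral_const_mul, integral_id]
    simp
    ring
  have e0 : a + (0:ℝ) • v = a := by simp
  have e1 : a + (1:ℝ) • v = b := by rw [one_smul, hv]; abel
  rw [e0, e1] at hftc
  rw [hrhs] at hmono
  linarith [hftc, hmono]

/-- Key interpolation bound for a convex function with a quadratic upper bound. -/
lemma key_lemma (g : E → ℝ) (g' : E → E) (hg : ∀ x, HasGradientAt g (g' x) x)
    (hconv : ConvexOn ℝ Set.univ g) {K : ℝ} (hK : 0 < K)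
    (hub : ∀ a b, g b ≤ g a + ⟪g' a, b - a⟫ + K / 2 * ‖b - a‖ ^ 2) (x y : E) :
    g y + ⟪g' y, x - y⟫ + 1 / (2 * K) * ‖g' x - g' y‖ ^ 2 ≤ g x := by
  set Δ := g' x - g' y with hΔ
  set b := x - (1 / K) • Δ with hb
  have h1 := hub x b
  have h2 := convex_grad_lower g hconv (hg y) b
  have e1 : b - x = -((1 / K) • Δ) := by rw [hb]; abel
  have e2 : b - y = (x - y) - (1 / K) • Δ := by rw [hb]; abel
  have i1 : ⟪g' x, b - x⟫ = -(1 / K) * ⟪g' x, Δ⟫ := by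
    rw [e1, inner_neg_right, real_inner_smul_right]; ring
  have n1 : ‖b - x‖ ^ 2 = (1 / K) ^ 2 * ‖Δ‖ ^ 2 := by
    rw [e1, norm_neg, norm_smul]
    rw [Real.norm_eq_abs, abs_of_pos (by positivity)]
    ring
  have i2 : ⟪g' y, b - y⟫ = ⟪g' y, x - y⟫ - (1 / K) * ⟪g' y, Δ⟫ := by
    rw [e2, inner_sub_right, real_inner_smul_right]
  have i3 : ⟪g' x, Δ⟫ - ⟪g' y, Δ⟫ = ‖Δ‖ ^ 2 := by
    rw [← inner_sub_left, ← hΔ, real_inner_self_eq_norm_sq]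
  rw [i1, n1] at h1
  rw [i2] at h2
  have hKne : K ≠ 0 := ne_of_gt hK
  have e3 : K / 2 * ((1 / K) ^ 2 * ‖Δ‖ ^ 2) = 1 / (2 * K) * ‖Δ‖ ^ 2 := by
    field_simp
  have e4 : (1 / K) * ‖Δ‖ ^ 2 - 1 / (2 * K) * ‖Δ‖ ^ 2 = 1 / (2 * K) * ‖Δ‖ ^ 2 := by
    field_simp; ring
  have i3' : (1 / K) * ⟪g' x, Δ⟫ - (1 / K) * ⟪g' y, Δ⟫ = (1 / K) * ‖Δ‖ ^ 2 := by
    rw [← mul_sub, i3]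
  linarith [h1, h2, e3, e4, i3']

end Aux

theorem stmt_0 (d : ℕ) (μ L : ℝ) (hμ : 0 < μ) (hμL : μ < L)
    (f : EuclideanSpace ℝ (Fin d) → ℝ) (hf : Differentiable ℝ f)
    (hsmooth : ∀ x y, ‖gradient f x - gradient f y‖ ≤ L * ‖x - y‖)
    (hsc : ConvexOn ℝ Set.univ (fun x => f x - μ / 2 * ‖x‖ ^ 2)) :
    ∀ x y, f x ≥ f y + ⟪gradient f y, x - y⟫ +
      (1 / (2 * (L - μ))) * (‖gradient f x - gradient f y‖ ^ 2
        + μ * L * ‖x - y‖ ^ 2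
        - 2 * μ * ⟪gradient f x - gradient f y, x - y⟫) := by
  intro x y
  set g : EuclideanSpace ℝ (Fin d) → ℝ := fun x => f x - μ / 2 * ‖x‖ ^ 2 with hgdef
  set g' : EuclideanSpace ℝ (Fin d) → EuclideanSpace ℝ (Fin d) := fun x => gradient f x - μ • x with hg'def
  -- gradients
  have hgf : ∀ z, HasGradientAt f (gradient f z) z := fun z => (hf z).hasGradientAt
  have hgg : ∀ z, HasGradientAt g (g' z) z := by
    intro z
    rw [hasGradientAt_iff_hasFDerivAt]
    have h1 : HasFDerivAt f (InnerProductSpace.toDual ℝ _ (gradient f z)) z :=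
      hasGradientAt_iff_hasFDerivAt.1 (hgf z)
    have h2 : HasFDerivAt (fun x : EuclideanSpace ℝ (Fin d) => ‖x‖ ^ 2) (2 • (innerSL ℝ z)) z :=
      (hasStrictFDerivAt_norm_sq z).hasFDerivAt
    have h3 := h1.sub (h2.const_mul (μ / 2))
    refine HasFDerivAt.congr_fderiv h3 ?_
    apply ContinuousLinearMap.ext
    intro w
    simp only [hg'def, ContinuousLinearMap.sub_apply, InnerProductSpace.toDual_apply_apply,
      ContinuousLinearMap.smul_apply, innerSL_apply_apply, smul_eq_mul]
    rw [inner_sub_left, real_inner_smul_left]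
    simp [two_smul]
    ring
  -- quadratic upper bound for g with constant L - μ
  have hdf : ∀ a b, f b ≤ f a + ⟪gradient f a, b - a⟫ + L / 2 * ‖b - a‖ ^ 2 :=
    descent_lemma f (gradient f) hgf hsmooth
  have hub : ∀ a b, g b ≤ g a + ⟪g' a, b - a⟫ + (L - μ) / 2 * ‖b - a‖ ^ 2 := by
    intro a b
    have h1 := hdf a b
    have hnb : ‖b‖ ^ 2 = ‖a‖ ^ 2 + 2 * ⟪a, b - a⟫ + ‖b - a‖ ^ 2 := by
      have hb' : a + (b - a) = b := by abel
      calc ‖b‖ ^ 2 = ‖a + (b - a)‖ ^ 2 := by rw [hb']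
        _ = ‖a‖ ^ 2 + 2 * ⟪a, b - a⟫ + ‖b - a‖ ^ 2 := norm_add_sq_real _ _
    have hi : ⟪g' a, b - a⟫ = ⟪gradient f a, b - a⟫ - μ * ⟪a, b - a⟫ := by
      simp only [hg'def, inner_sub_left, real_inner_smul_left]
    simp only [hgdef]
    rw [hi, hnb]
    linarith
  have key := key_lemma g g' hgg hsc (by linarith : (0:ℝ) < L - μ) hub x y
  -- expand
  set u := gradient f x - gradient f y with hu
  set w := x - y with hw
  have hΔ : g' x - g' y = u - μ • w := by
    simp only [hg'def, hu, hw]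
    module
  have hn1 : ‖g' x - g' y‖ ^ 2 = ‖u‖ ^ 2 - 2 * μ * ⟪u, w⟫ + μ ^ 2 * ‖w‖ ^ 2 := by
    rw [hΔ, @norm_sub_sq_real, real_inner_smul_right, norm_smul, Real.norm_eq_abs,
      abs_of_pos hμ]
    ring
  have hi1 : ⟪g' y, w⟫ = ⟪gradient f y, w⟫ - μ * ⟪y, w⟫ := by
    simp only [hg'def, inner_sub_left, real_inner_smul_left]
  have hnx : ‖x‖ ^ 2 = ‖y‖ ^ 2 + 2 * ⟪y, w⟫ + ‖w‖ ^ 2 := by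
    have hy' : y + w = x := by rw [hw]; abel
    calc ‖x‖ ^ 2 = ‖y + w‖ ^ 2 := by rw [hy']
      _ = ‖y‖ ^ 2 + 2 * ⟪y, w⟫ + ‖w‖ ^ 2 := norm_add_sq_real _ _
  rw [hn1, hi1] at key
  simp only [hgdef] at key
  rw [hnx] at key
  have hKpos : (0:ℝ) < L - μ := by linarith
  have e : 1 / (2 * (L - μ)) * (μ * L * ‖w‖ ^ 2) =
      1 / (2 * (L - μ)) * (μ ^ 2 * ‖w‖ ^ 2) + μ / 2 * ‖w‖ ^ 2 := by
    field_simp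
    ring
  have expand1 : 1 / (2 * (L - μ)) * (‖u‖ ^ 2 - 2 * μ * ⟪u, w⟫ + μ ^ 2 * ‖w‖ ^ 2) =
      1 / (2 * (L - μ)) * ‖u‖ ^ 2 - 1 / (2 * (L - μ)) * (2 * μ * ⟪u, w⟫)
        + 1 / (2 * (L - μ)) * (μ ^ 2 * ‖w‖ ^ 2) := by ring
  have expand2 : 1 / (2 * (L - μ)) * (‖u‖ ^ 2 + μ * L * ‖w‖ ^ 2 - 2 * μ * ⟪u, w⟫) =
      1 / (2 * (L - μ)) * ‖u‖ ^ 2 + 1 / (2 * (L - μ)) * (μ * L * ‖w‖ ^ 2)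
        - 1 / (2 * (L - μ)) * (2 * μ * ⟪u, w⟫) := by ring
  rw [expand1] at key
  rw [ge_iff_le, expand2]
  linarith [key, e]
end

section
/- Let f : ℝ^d → ℝ be differentiable, L-smooth and μ-strongly convex with 0 < μ ≤ L, and let x_⋆ be its minimizer. For the gradient method x_{k+1} = x_k − (1/L)∇f(x_k), one has ‖x_{k+1} − x_⋆‖ ≤ (1 − μ/L)‖x_k − x_⋆‖ for all k. -/
open Set InnerProductSpace
open scoped RealInnerProductSpace

/-!
The function `g = f - μ/2 ‖·‖²` is convex, and so is `(L - μ)/2 ‖·‖² - g = L/2 ‖·‖² - f` because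
`∇f` is `L`-Lipschitz. Comparing `g` at `y - t (∇g y - ∇g x)` from below (convexity at `x`) and
from above (the descent lemma at `y`), for every `t`, makes `∇g` cocoercive:
`‖∇g x - ∇g y‖² ≤ (L - μ) ⟪∇g x - ∇g y, x - y⟫`. Now
`x_{k+1} - x⋆ = (1 - μ/L)(x_k - x⋆) - (1/L) v` with `v = ∇g x_k - ∇g x⋆`, and after expanding the
square, cocoercivity lets the cross term absorb `‖v‖² / L²`.
-/

section

variable {F : Type*} [NormedAddCommGroup F] [InnerProductSpace ℝ F] [CompleteSpace F]
  {G H : F → ℝ} {G' : F → F} {g h x y : F} {t c : ℝ}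

theorem HasGradientAt.sub (hG : HasGradientAt G g x) (hH : HasGradientAt H h x) :
    HasGradientAt (fun z => G z - H z) (g - h) x := by
  rw [hasGradientAt_iff_hasFDerivAt, map_sub]
  exact hG.hasFDerivAt.sub hH.hasFDerivAt

theorem hasGradientAt_half_mul_norm_sq (c : ℝ) (x : F) :
    HasGradientAt (fun z : F => c / 2 * ‖z‖ ^ 2) (c • x) x := by
  rw [hasGradientAt_iff_hasFDerivAt]
  refine ((hasStrictFDerivAt_norm_sq x).hasFDerivAt.const_mul (c / 2)).congr_fderiv ?_
  ext u
  simp [toDual_apply_apply]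
  ring

theorem HasGradientAt.hasDerivAt_comp_lineMap (hG : HasGradientAt G g (AffineMap.lineMap x y t)) :
    HasDerivAt (fun s : ℝ => G (AffineMap.lineMap x y s)) ⟪g, y - x⟫ t := by
  have := hG.hasFDerivAt.comp_hasDerivAt t (AffineMap.hasDerivAt_lineMap (a := x) (b := y))
  rwa [toDual_apply_apply] at this

theorem ConvexOn.add_inner_le_of_hasGradientAt {s : Set F} (hc : ConvexOn ℝ s G) (hx : x ∈ s)
    (hy : y ∈ s) (hG : HasGradientAt G g x) : G x + ⟪g, y - x⟫ ≤ G y := by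
  have h0 : (0 : ℝ) ∈ AffineMap.lineMap x y ⁻¹' s := by simpa using hx
  have h1 : (1 : ℝ) ∈ AffineMap.lineMap x y ⁻¹' s := by simpa using hy
  have := (hc.comp_affineMap (AffineMap.lineMap x y)).le_slope_of_hasDerivAt h0 h1 zero_lt_one
    (HasGradientAt.hasDerivAt_comp_lineMap (by simpa using hG))
  simp [slope_def_field] at this
  linarith

theorem le_add_inner_add_half_mul_norm_sq
    (hsmooth : ConvexOn ℝ univ fun z => c / 2 * ‖z‖ ^ 2 - G z) (hG : HasGradientAt G g x) (y : F) :
    G y ≤ G x + ⟪g, y - x⟫ + c / 2 * ‖y - x‖ ^ 2 := by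
  have := hsmooth.add_inner_le_of_hasGradientAt (mem_univ x) (mem_univ y)
    ((hasGradientAt_half_mul_norm_sq c x).sub hG)
  rw [inner_sub_left, real_inner_smul_left, inner_sub_right, real_inner_self_eq_norm_sq] at this
  rw [norm_sub_sq_real, real_inner_comm x y]
  linarith

theorem convexOn_univ_of_inner_sub_sub_nonneg (hG : ∀ z, HasGradientAt G (G' z) z)
    (hmono : ∀ x y, 0 ≤ ⟪G' x - G' y, x - y⟫) : ConvexOn ℝ univ G := by
  refine ⟨convex_univ, fun x _ y _ a b ha hb hab => ?_⟩
  have hφ' (t : ℝ) := (hG (AffineMap.lineMap x y t)).hasDerivAt_comp_lineMap (t := t)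
  have hφ : ConvexOn ℝ univ fun t : ℝ => G (AffineMap.lineMap x y t) := by
    refine Monotone.convexOn_univ_of_deriv (fun t => (hφ' t).differentiableAt) fun s t hst => ?_
    obtain rfl | hst := hst.eq_or_lt
    · exact le_rfl
    have hline : AffineMap.lineMap x y t - AffineMap.lineMap x y s = (t - s) • (y - x) := by
      simp only [AffineMap.lineMap_apply_module']; module
    have := hmono (AffineMap.lineMap x y t) (AffineMap.lineMap x y s)
    rw [hline, real_inner_smul_right] at this
    rw [(hφ' s).deriv, (hφ' t).deriv, ← sub_nonneg, ← inner_sub_left]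
    exact nonneg_of_mul_nonneg_right this (sub_pos.2 hst)
  have := hφ.2 (mem_univ 0) (mem_univ 1) ha hb hab
  obtain rfl : a = 1 - b := by linarith
  simpa [AffineMap.lineMap_apply_module] using this

theorem convexOn_univ_half_mul_norm_sq_sub_of_lipschitz (hG : ∀ z, HasGradientAt G (G' z) z)
    (hlip : ∀ x y, ‖G' x - G' y‖ ≤ c * ‖x - y‖) :
    ConvexOn ℝ univ fun z => c / 2 * ‖z‖ ^ 2 - G z := by
  refine convexOn_univ_of_inner_sub_sub_nonneg
    (fun z => (hasGradientAt_half_mul_norm_sq c z).sub (hG z)) fun x y => ?_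
  have hcs := real_inner_le_norm (G' x - G' y) (x - y)
  have hexp : ⟪c • x - G' x - (c • y - G' y), x - y⟫
      = c * ‖x - y‖ ^ 2 - ⟪G' x - G' y, x - y⟫ := by
    rw [show c • x - G' x - (c • y - G' y) = c • (x - y) - (G' x - G' y) by module,
      inner_sub_left, real_inner_smul_left, real_inner_self_eq_norm_sq]
  rw [hexp, sq]
  nlinarith [mul_le_mul_of_nonneg_right (hlip x y) (norm_nonneg (x - y))]

theorem mul_norm_sub_sq_le_sub_sub_inner (hconv : ConvexOn ℝ univ G)
    (hsmooth : ConvexOn ℝ univ fun z => c / 2 * ‖z‖ ^ 2 - G z)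
    (hx : HasGradientAt G g x) (hy : HasGradientAt G h y) (t : ℝ) :
    (t - c * t ^ 2 / 2) * ‖h - g‖ ^ 2 ≤ G y - G x - ⟪g, y - x⟫ := by
  set w := y - t • (h - g)
  have hlower := hconv.add_inner_le_of_hasGradientAt (mem_univ x) (mem_univ w) hx
  have hupper := le_add_inner_add_half_mul_norm_sq hsmooth hy w
  have hwx : w - x = (y - x) - t • (h - g) := by simp only [w]; abel
  have hwy : w - y = -(t • (h - g)) := by simp only [w]; abel
  rw [hwx, inner_sub_right, real_inner_smul_right] at hlower
  rw [hwy, norm_neg, norm_smul, inner_neg_right, real_inner_smul_right, mul_pow,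
    Real.norm_eq_abs, sq_abs] at hupper
  have hD : ⟪h, h - g⟫ - ⟪g, h - g⟫ = ‖h - g‖ ^ 2 := by
    rw [← inner_sub_left, real_inner_self_eq_norm_sq]
  linear_combination hlower + hupper - t * hD

theorem ConvexOn.norm_sub_sq_le_mul_inner (hconv : ConvexOn ℝ univ G) (hc : 0 ≤ c)
    (hsmooth : ConvexOn ℝ univ fun z => c / 2 * ‖z‖ ^ 2 - G z)
    (hx : HasGradientAt G g x) (hy : HasGradientAt G h y) :
    ‖g - h‖ ^ 2 ≤ c * ⟪g - h, x - y⟫ := by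
  set N := ‖g - h‖ ^ 2
  set s := ⟪g - h, x - y⟫
  have hsum (t : ℝ) : (2 * t - c * t ^ 2) * N ≤ s := by
    have h1 := mul_norm_sub_sq_le_sub_sub_inner hconv hsmooth hx hy t
    have h2 := mul_norm_sub_sq_le_sub_sub_inner hconv hsmooth hy hx t
    have e : s = (G y - G x - ⟪g, y - x⟫) + (G x - G y - ⟪h, x - y⟫) := by
      simp only [s, inner_sub_left]
      rw [← neg_sub x y, inner_neg_right]; ring
    rw [norm_sub_rev] at h1
    linarith
  have hs : 0 ≤ s := by simpa using hsum 0
  -- a quadratic in `t` that is everywhere nonnegative; its discriminant also covers `c = 0`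
  have hdisc := discrim_le_zero (a := c * N) (b := -2 * N) (c := s) fun t => by
    linarith [hsum t]
  rw [discrim] at hdisc
  have hN : 0 ≤ N := by positivity
  nlinarith [mul_nonneg hc hs]

end

theorem norm_sub_one_div_smul_le {F : Type*} [NormedAddCommGroup F] [InnerProductSpace ℝ F]
    {a D : F} {μ L : ℝ} (hL : 0 < L) (hμL : μ ≤ L)
    (h : ‖D - μ • a‖ ^ 2 ≤ (L - μ) * ⟪D - μ • a, a⟫) :
    ‖a - (1 / L) • D‖ ≤ (1 - μ / L) * ‖a‖ := by
  set v := D - μ • a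
  have hstep : a - (1 / L) • D = (1 - μ / L) • a - (1 / L) • v := by
    simp only [v]
    match_scalars
    · field_simp
      ring
    · field_simp
  have hcoef : 0 ≤ 1 - μ / L := by rw [sub_nonneg, div_le_one hL]; exact hμL
  refine le_of_pow_le_pow_left₀ two_ne_zero (by positivity) ?_
  rw [hstep, norm_sub_sq_real, norm_smul, norm_smul, inner_smul_left, inner_smul_right,
    Real.norm_of_nonneg hcoef, Real.norm_of_nonneg (by positivity), real_inner_comm]
  have hv : 0 ≤ ‖v‖ ^ 2 := by positivity
  have key : ‖v‖ ^ 2 / L ^ 2 ≤ 2 * ((L - μ) * ⟪v, a⟫ / L ^ 2) := by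
    rw [← mul_div_assoc]; gcongr; linarith
  have e1 : (1 / L * ‖v‖) ^ 2 = ‖v‖ ^ 2 / L ^ 2 := by ring
  have e2 : (1 - μ / L) * (1 / L * ⟪v, a⟫) = (L - μ) * ⟪v, a⟫ / L ^ 2 := by field_simp
  rw [starRingEnd_apply, star_trivial, e1, e2]
  linarith

theorem stmt_6 (d : ℕ) (μ L : ℝ) (hμ : 0 < μ) (hμL : μ ≤ L)
    (f : EuclideanSpace ℝ (Fin d) → ℝ) (hf : Differentiable ℝ f)
    (hsmooth : ∀ x y, ‖gradient f x - gradient f y‖ ≤ L * ‖x - y‖)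
    (hsc : ConvexOn ℝ Set.univ (fun x => f x - μ / 2 * ‖x‖ ^ 2))
    (xstar : EuclideanSpace ℝ (Fin d)) (hcrit : gradient f xstar = 0)
    (x : ℕ → EuclideanSpace ℝ (Fin d))
    (hiter : ∀ k, x (k + 1) = x k - (1 / L) • gradient f (x k)) :
    ∀ k, ‖x (k + 1) - xstar‖ ≤ (1 - μ / L) * ‖x k - xstar‖ := by
  intro k
  have hf' (z : EuclideanSpace ℝ (Fin d)) : HasGradientAt f (gradient f z) z :=
    (hf z).hasGradientAt
  have hg (z : EuclideanSpace ℝ (Fin d)) :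
      HasGradientAt (fun x => f x - μ / 2 * ‖x‖ ^ 2) (gradient f z - μ • z) z :=
    (hf' z).sub (hasGradientAt_half_mul_norm_sq μ z)
  have hgsmooth : ConvexOn ℝ univ
      fun z => (L - μ) / 2 * ‖z‖ ^ 2 - (f z - μ / 2 * ‖z‖ ^ 2) := by
    refine (convexOn_univ_half_mul_norm_sq_sub_of_lipschitz hf' hsmooth).congr fun z _ => ?_
    ring
  have hcoco := hsc.norm_sub_sq_le_mul_inner (sub_nonneg.2 hμL) hgsmooth (hg (x k)) (hg xstar)
  have hgrad_sub : gradient f (x k) - μ • x k - (gradient f xstar - μ • xstar)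
      = gradient f (x k) - μ • (x k - xstar) := by
    rw [hcrit]; module
  rw [hgrad_sub] at hcoco
  rw [hiter k, sub_right_comm]
  exact norm_sub_one_div_smul_le (hμ.trans_le hμL) hμL hcoco
end

section
/- Let f : ℝ^d → ℝ be differentiable, L-smooth and μ-strongly convex with 0 < μ < L, and x_⋆ its minimizer. For exact line search steepest descent x_{k+1} = x_k − α_k∇f(x_k) with α_k = argmin_α f(x_k − α∇f(x_k)), one has f(x_{k+1}) − f(x_⋆) ≤ ((κ−1)/(κ+1))²·(f(x_k) − f(x_⋆)) where κ = L/μ. -/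
/-!
This is the performance-estimation argument of de Klerk, Glineur and Taylor. Since
`f - μ/2 ‖·‖²` is convex and `(L - μ)`-smooth, cocoercivity gives, for all points `a, b`, the
interpolation inequality
`f a ≥ f b + ⟪∇f b, a - b⟫ + μ/2 ‖a - b‖² + ‖∇f a - ∇f b - μ (a - b)‖² / (2 (L - μ))`.
Exact line search makes the new gradient orthogonal to the old one. The contraction bound is then
a nonnegative combination of the interpolation inequalities between `x₀`, `x₁ = x₀ - α ∇f x₀`
and `x⋆`, up to two squares.
-/

open Set RealInnerProductSpace

section InnerProductSpace

variable {F : Type*} [NormedAddCommGroup F] [InnerProductSpace ℝ F]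

theorem add_inner_add_norm_sq_le_of_quadratic_bounds {f : F → ℝ} {g : F → F} {C : ℝ}
    (hC : 0 < C) (hupper : ∀ x y, f y ≤ f x + ⟪g x, y - x⟫ + C / 2 * ‖y - x‖ ^ 2)
    (hlower : ∀ x y, f x + ⟪g x, y - x⟫ ≤ f y) (a b : F) :
    f b + ⟪g b, a - b⟫ + 1 / (2 * C) * ‖g a - g b‖ ^ 2 ≤ f a := by
  -- both bounds are evaluated at the gradient step from `a` for the tilted function `f - ⟪g b, ·⟫`
  have hup := hupper a (a - C⁻¹ • (g a - g b))
  have hlow := hlower b (a - C⁻¹ • (g a - g b))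
  rw [sub_sub_cancel_left] at hup
  rw [sub_right_comm] at hlow
  simp only [← real_inner_self_eq_norm_sq, inner_sub_left, inner_sub_right, inner_neg_left,
    inner_neg_right, real_inner_smul_left, real_inner_smul_right, real_inner_comm (g a) (g b)]
    at hup hlow ⊢
  linear_combination (norm := skip) hup + hlow
  apply le_of_eq
  field_simp
  ring

section Gradient

variable [CompleteSpace F]

theorem HasGradientAt.hasDerivAt_comp_add_smul {f : F → ℝ} {g a v : F} {t : ℝ}
    (hf : HasGradientAt f g (a + t • v)) :
    HasDerivAt (fun s : ℝ => f (a + s • v)) ⟪g, v⟫ t := by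
  have hline : HasDerivAt (fun s : ℝ => a + s • v) v t := by
    simpa using ((hasDerivAt_id t).smul_const v).const_add a
  have h := (hasGradientAt_iff_hasFDerivAt.mp hf).comp_hasDerivAt t hline
  rw [InnerProductSpace.toDual_apply_apply] at h
  exact h

theorem HasGradientAt.sub_half_mul_norm_sq {f : F → ℝ} {g x : F} (hf : HasGradientAt f g x)
    (c : ℝ) : HasGradientAt (fun y => f y - c / 2 * ‖y‖ ^ 2) (g - c • x) x := by
  rw [hasGradientAt_iff_hasFDerivAt] at hf ⊢
  refine (hf.sub ((hasStrictFDerivAt_norm_sq x).hasFDerivAt.const_mul (c / 2))).congr_fderiv ?_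
  ext v
  simp only [sub_apply, smul_apply, InnerProductSpace.toDual_apply_apply, coe_innerSL_apply,
    map_sub, map_smul, smul_eq_mul, nsmul_eq_mul]
  ring

theorem inner_eq_zero_of_forall_le_sub_smul {f : F → ℝ} {g x v : F} {t : ℝ}
    (hf : HasGradientAt f g (x - t • v)) (hmin : ∀ s : ℝ, f (x - t • v) ≤ f (x - s • v)) :
    ⟪g, v⟫ = 0 := by
  simp only [sub_eq_add_neg, ← smul_neg] at hf hmin
  have hmin' : IsLocalMin (fun s : ℝ => f (x + s • -v)) t := Filter.Eventually.of_forall hmin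
  simpa using hmin'.hasDerivAt_eq_zero hf.hasDerivAt_comp_add_smul

theorem ConvexOn.add_inner_le_of_hasGradientAt_s16 {f : F → ℝ} {g a : F} (hc : ConvexOn ℝ univ f)
    (hf : HasGradientAt f g a) (b : F) : f a + ⟪g, b - a⟫ ≤ f b := by
  have hline : ConvexOn ℝ univ (fun t : ℝ => f (a + t • (b - a))) := by
    have hfun : (fun t : ℝ => f (a + t • (b - a))) = f ∘ AffineMap.lineMap a b := by
      ext t
      simp [AffineMap.lineMap_apply_module', add_comm]
    simpa [hfun] using hc.comp_affineMap (AffineMap.lineMap a b)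
  have hderiv : HasDerivAt (fun t : ℝ => f (a + t • (b - a))) ⟪g, b - a⟫ 0 :=
    HasGradientAt.hasDerivAt_comp_add_smul (by simpa using hf)
  have hslope := hline.le_slope_of_hasDerivAt (mem_univ 0) (mem_univ 1) one_pos hderiv
  simp only [slope_def_field, zero_smul, add_zero, one_smul, add_sub_cancel, sub_zero,
    div_one] at hslope
  linarith

theorem le_add_inner_add_of_lipschitz_gradient {f : F → ℝ} {g : F → F} {C : ℝ}
    (hg : ∀ x, HasGradientAt f (g x) x) (hlip : ∀ x y, ‖g x - g y‖ ≤ C * ‖x - y‖) (a b : F) :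
    f b ≤ f a + ⟪g a, b - a⟫ + C / 2 * ‖b - a‖ ^ 2 := by
  set v := b - a
  set φ : ℝ → ℝ := fun s => f (a + s • v) - s * ⟪g a, v⟫ - C / 2 * s ^ 2 * ‖v‖ ^ 2
  have hφ : ∀ t, HasDerivAt φ (⟪g (a + t • v) - g a, v⟫ - C * t * ‖v‖ ^ 2) t := by
    intro t
    have h₁ : HasDerivAt (fun s : ℝ => f (a + s • v)) ⟪g (a + t • v), v⟫ t :=
      (hg _).hasDerivAt_comp_add_smul
    have h₂ := (hasDerivAt_id t).mul_const ⟪g a, v⟫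
    have h₃ := ((hasDerivAt_pow 2 t).const_mul (C / 2)).mul_const (‖v‖ ^ 2)
    refine ((h₁.sub h₂).sub h₃).congr_deriv ?_
    rw [inner_sub_left]
    push_cast
    ring
  have hφ_nonpos : ∀ t ∈ interior (Icc (0 : ℝ) 1),
      ⟪g (a + t • v) - g a, v⟫ - C * t * ‖v‖ ^ 2 ≤ 0 := by
    intro t ht
    rw [interior_Icc] at ht
    rw [sub_nonpos]
    calc ⟪g (a + t • v) - g a, v⟫ ≤ ‖g (a + t • v) - g a‖ * ‖v‖ := real_inner_le_norm _ _
      _ ≤ C * ‖a + t • v - a‖ * ‖v‖ := by gcongr; exact hlip _ _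
      _ = C * t * ‖v‖ ^ 2 := by
        rw [add_sub_cancel_left, norm_smul, Real.norm_of_nonneg ht.1.le]; ring
  have hφ01 := antitoneOn_of_hasDerivWithinAt_nonpos (convex_Icc 0 1)
    (fun t _ => (hφ t).continuousAt.continuousWithinAt) (fun t _ => (hφ t).hasDerivWithinAt)
    hφ_nonpos (left_mem_Icc.2 zero_le_one) (right_mem_Icc.2 zero_le_one) zero_le_one
  have hφ0 : φ 0 = f a := by simp [φ]
  have hφ1 : φ 1 = f b - ⟪g a, v⟫ - C / 2 * ‖v‖ ^ 2 := by simp [φ, v]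
  linarith

theorem interpolation_inequality {f : F → ℝ} {g : F → F} {μ L : ℝ} (hμL : μ < L)
    (hg : ∀ x, HasGradientAt f (g x) x) (hsmooth : ∀ x y, ‖g x - g y‖ ≤ L * ‖x - y‖)
    (hsc : ConvexOn ℝ univ fun x => f x - μ / 2 * ‖x‖ ^ 2) (a b : F) :
    f b + ⟪g b, a - b⟫ + μ / 2 * ‖a - b‖ ^ 2
      + 1 / (2 * (L - μ)) * ‖g a - g b - μ • (a - b)‖ ^ 2 ≤ f a := by
  set h := fun x => f x - μ / 2 * ‖x‖ ^ 2
  have hupper : ∀ x y, h y ≤ h x + ⟪g x - μ • x, y - x⟫ + (L - μ) / 2 * ‖y - x‖ ^ 2 := by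
    intro x y
    have hf_upper := le_add_inner_add_of_lipschitz_gradient hg hsmooth x y
    simp only [h, ← real_inner_self_eq_norm_sq, inner_sub_left, inner_sub_right,
      real_inner_smul_left, real_inner_comm x y] at hf_upper ⊢
    linarith
  have hlower : ∀ x y, h x + ⟪g x - μ • x, y - x⟫ ≤ h y := fun x y =>
    hsc.add_inner_le_of_hasGradientAt_s16 ((hg x).sub_half_mul_norm_sq μ) y
  have hcoco := add_inner_add_norm_sq_le_of_quadratic_bounds (sub_pos.2 hμL) hupper hlower a b
  rw [show g a - μ • a - (g b - μ • b) = g a - g b - μ • (a - b) by module] at hcoco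
  simp only [h, ← real_inner_self_eq_norm_sq, inner_sub_left, inner_sub_right,
    real_inner_smul_left, real_inner_comm a b] at hcoco ⊢
  linarith

end Gradient

theorem gradient_step_gap_le_of_interpolation {f : F → ℝ} {g : F → F} {μ L : ℝ}
    (hμ : 0 < μ) (hμL : μ < L)
    (hint : ∀ a b, f b + ⟪g b, a - b⟫ + μ / 2 * ‖a - b‖ ^ 2
      + 1 / (2 * (L - μ)) * ‖g a - g b - μ • (a - b)‖ ^ 2 ≤ f a)
    {xs x : F} {α : ℝ} (hs : g xs = 0) (horth : ⟪g (x - α • g x), g x⟫ = 0) :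
    f (x - α • g x) - f xs ≤ ((L - μ) / (L + μ)) ^ 2 * (f x - f xs) := by
  have hD : 0 < L - μ := by linarith
  have hS : 0 < L + μ := by linarith
  have h₁ := hint x (x - α • g x)
  have h₂ := hint xs x
  have h₃ := hint xs (x - α • g x)
  rw [sub_sub_cancel] at h₁
  rw [hs, ← neg_sub] at h₂
  rw [hs, show xs - (x - α • g x) = α • g x - (x - xs) by abel] at h₃
  set e := x - xs
  set g₀ := g x
  set g₁ := g (x - α • g₀)
  rw [real_inner_comm] at horth
  have hsq₁ : 0 ≤ ‖(2 * L * μ) • e - (α * μ * (L + μ) + (L - μ)) • g₀ - (L + μ) • g₁‖ ^ 2 := by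
    positivity
  have hsq₂ : 0 ≤ (2 - α * (L + μ)) ^ 2 * ‖g₀‖ ^ 2 := by positivity
  simp only [← real_inner_self_eq_norm_sq, inner_sub_left, inner_sub_right, inner_neg_left,
    inner_neg_right, inner_zero_left, inner_zero_right, real_inner_smul_left, real_inner_smul_right,
    real_inner_comm e g₀, real_inner_comm e g₁, real_inner_comm g₀ g₁, horth] at h₁ h₂ h₃ hsq₁ hsq₂
  rw [div_pow, div_mul_eq_mul_div, le_div_iff₀ (by positivity)]
  -- the dual certificate of the performance-estimation problem
  linear_combination (norm := skip) ((L - μ) * (L + μ)) * h₁ + ((L - μ) * (2 * μ)) * h₂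
    + (2 * μ * (L + μ)) * h₃ + (1 / (2 * (L - μ))) * hsq₁ + (μ / 2) * hsq₂
  apply le_of_eq
  field_simp
  ring

end InnerProductSpace

theorem stmt_16 (d : ℕ) (μ L : ℝ) (hμ : 0 < μ) (hμL : μ < L)
    (f : EuclideanSpace ℝ (Fin d) → ℝ) (hf : Differentiable ℝ f)
    (hsmooth : ∀ x y, ‖gradient f x - gradient f y‖ ≤ L * ‖x - y‖)
    (hsc : ConvexOn ℝ Set.univ (fun x => f x - μ / 2 * ‖x‖ ^ 2))
    (xstar : EuclideanSpace ℝ (Fin d)) (hcrit : gradient f xstar = 0)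
    (xk : EuclideanSpace ℝ (Fin d)) (αk : ℝ)
    (hmin : ∀ α : ℝ, f (xk - αk • gradient f xk) ≤ f (xk - α • gradient f xk)) :
    f (xk - αk • gradient f xk) - f xstar ≤
      ((L / μ - 1) / (L / μ + 1)) ^ 2 * (f xk - f xstar) := by
  have hg : ∀ x, HasGradientAt f (gradient f x) x := fun x => (hf x).hasGradientAt
  have hρ : (L / μ - 1) / (L / μ + 1) = (L - μ) / (L + μ) := by field_simp
  rw [hρ]
  exact gradient_step_gap_le_of_interpolation hμ hμL (interpolation_inequality hμL hg hsmooth hsc)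
    hcrit (inner_eq_zero_of_forall_le_sub_smul (hg _) hmin)
end

section
/- Let μ, L with 0 < μ ≤ L. For any two triples (y_i, g_i, f_i), (y_j, g_j, f_j) in ℝ^d × ℝ^d × ℝ sampled from some f ∈ F_{μ,L} (i.e., f(y_i) = f_i, ∇f(y_i) = g_i and similarly for j), the quantity φ_{ij} := (L−μ)(f_i − f_j − ⟨g_j, y_i − y_j⟩) − (1/2)‖g_i − g_j‖² − (μL/2)‖y_i − y_j‖² + μ⟨g_i − g_j, y_i − y_j⟩ is nonnegative. -/
open scoped RealInnerProductSpace
open InnerProductSpace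

variable {E : Type*} [NormedAddCommGroup E] [InnerProductSpace ℝ E] [CompleteSpace E]

lemma lineDeriv' (f : E → ℝ) (hf : Differentiable ℝ f) (x v : E) (t : ℝ) :
    HasDerivAt (fun s : ℝ => f (x + s • v)) ⟪gradient f (x + t • v), v⟫ t := by
  have h1 : HasFDerivAt f (toDual ℝ E (gradient f (x + t • v))) (x + t • v) :=
    (hf _).hasGradientAt.hasFDerivAt
  have h2 : HasDerivAt (fun s : ℝ => x + s • v) v t := by
    simpa using ((hasDerivAt_id t).smul_const v).const_add x
  exact h1.comp_hasDerivAt t h2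

lemma grad_ineq' {h : E → ℝ} (hd : Differentiable ℝ h) (hc : ConvexOn ℝ Set.univ h) (x y : E) :
    h x + ⟪gradient h x, y - x⟫ ≤ h y := by
  set g : ℝ → ℝ := fun t => h (x + t • (y - x)) with hg
  have hgc : ConvexOn ℝ Set.univ g := by
    have := hc.comp_affineMap (AffineMap.lineMap x y)
    have e : g = h ∘ AffineMap.lineMap x y := by
      ext t
      simp [g, AffineMap.lineMap_apply, add_comm]
    rw [e]; exact this.subset (Set.subset_univ _) convex_univ
  have hder : HasDerivAt g ⟪gradient h (x + (0:ℝ) • (y - x)), y - x⟫ 0 := lineDeriv' h hd x (y - x) 0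
  have := hgc.le_slope_of_hasDerivAt (Set.mem_univ (0:ℝ)) (Set.mem_univ (1:ℝ)) one_pos hder
  simp [slope, g] at this
  rw [inner_gradient_left, map_sub]; linarith

lemma descent' {f : E → ℝ} (hf : Differentiable ℝ f) {K : ℝ} (hK : 0 ≤ K)
    (hl : ∀ x y, ‖gradient f x - gradient f y‖ ≤ K * ‖x - y‖) (x y : E) :
    f y ≤ f x + ⟪gradient f x, y - x⟫ + K / 2 * ‖y - x‖ ^ 2 := by
  set v : E := y - x with hv
  set g : ℝ → ℝ := fun t => f (x + t • v) with hg
  set g' : ℝ → ℝ := fun t => ⟪gradient f (x + t • v), v⟫ with hg'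
  have hder : ∀ t : ℝ, HasDerivAt g (g' t) t := fun t => lineDeriv' f hf x v t
  have hgradcont : Continuous fun z : E => gradient f z := by
    refine (LipschitzWith.of_dist_le_mul (K := K.toNNReal) (fun a b => ?_)).continuous
    rw [dist_eq_norm, dist_eq_norm]
    simpa [Real.coe_toNNReal K hK] using hl a b
  have hcont : Continuous g' := by
    exact (hgradcont.comp (by continuity)).inner continuous_const
  have hint : IntervalIntegrable g' MeasureTheory.volume 0 1 :=
    hcont.intervalIntegrable 0 1
  have key : g 1 - g 0 = ∫ t in (0:ℝ)..1, g' t :=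
    (intervalIntegral.integral_eq_sub_of_hasDerivAt (fun t _ => hder t) hint).symm
  have hbound : ∀ t ∈ Set.Icc (0:ℝ) 1, g' t ≤ ⟪gradient f x, v⟫ + K * ‖v‖ ^ 2 * t := by
    intro t ht
    have h1 : g' t - ⟪gradient f x, v⟫ = ⟪gradient f (x + t • v) - gradient f x, v⟫ := by
      simp [g', inner_sub_left]
    have h2 : ⟪gradient f (x + t • v) - gradient f x, v⟫ ≤
        ‖gradient f (x + t • v) - gradient f x‖ * ‖v‖ := real_inner_le_norm _ _
    have h3 : ‖gradient f (x + t • v) - gradient f x‖ ≤ K * (t * ‖v‖) := by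
      have := hl (x + t • v) x
      simpa [norm_smul, abs_of_nonneg ht.1] using this
    nlinarith [norm_nonneg v, mul_le_mul_of_nonneg_right h3 (norm_nonneg v)]
  have hintle : (∫ t in (0:ℝ)..1, g' t) ≤ ∫ t in (0:ℝ)..1, (⟪gradient f x, v⟫ + K * ‖v‖ ^ 2 * t) := by
    apply intervalIntegral.integral_mono_on zero_le_one hint
    · exact (continuous_const.add (continuous_const.mul continuous_id)).intervalIntegrable 0 1
    · exact hbound
  have hcomp : (∫ t in (0:ℝ)..1, (⟪gradient f x, v⟫ + K * ‖v‖ ^ 2 * t))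
      = ⟪gradient f x, v⟫ + K / 2 * ‖v‖ ^ 2 := by
    have : (∫ t in (0:ℝ)..1, (⟪gradient f x, v⟫ + K * ‖v‖ ^ 2 * t))
        = (∫ t in (0:ℝ)..1, ⟪gradient f x, v⟫) + ∫ t in (0:ℝ)..1, K * ‖v‖ ^ 2 * t := by
      apply intervalIntegral.integral_add intervalIntegrable_const
      exact ((continuous_const.mul continuous_id).intervalIntegrable 0 1)
    rw [this, intervalIntegral.integral_const_mul, integral_id]
    simp
    ring
  have hg0 : g 0 = f x := by simp [g]
  have hg1 : g 1 = f y := by simp [g, v]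
  linarith [key, hintle, hcomp.le, hcomp.ge]


lemma coco {E : Type*} [NormedAddCommGroup E] [InnerProductSpace ℝ E] [CompleteSpace E]
    {h : E → ℝ} {K : ℝ} (hK : 0 ≤ K) (hd : Differentiable ℝ h)
    (hc : ConvexOn ℝ Set.univ h)
    (hq : ∀ z w : E, h w ≤ h z + ⟪gradient h z, w - z⟫ + K / 2 * ‖w - z‖ ^ 2)
    (x y : E) :
    1 / 2 * ‖gradient h y - gradient h x‖ ^ 2
      ≤ K * (h y - h x - ⟪gradient h x, y - x⟫) := by
  have hmin : ∀ z : E, h x + ⟪gradient h x, z - x⟫ ≤ h z := fun z => grad_ineq' hd hc x z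
  rcases eq_or_lt_of_le hK with hK0 | hKpos
  · -- K = 0
    have hupper : ∀ w : E, h w ≤ h y + ⟪gradient h y, w - y⟫ := by
      intro w
      have := hq y w
      rw [← hK0] at this
      simpa using this
    have hu0 : gradient h y - gradient h x = 0 := by
      by_contra hne
      have hnu : 0 < ‖gradient h y - gradient h x‖ ^ 2 :=
        pow_pos (norm_pos_iff.mpr hne) 2
      set c : ℝ := h x - h y - ⟪gradient h x, x⟫ + ⟪gradient h y, y⟫ with hc'
      have hlow : ∀ w : E, c ≤ ⟪gradient h y - gradient h x, w⟫ := by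
        intro w
        have h1 := le_trans (hmin w) (hupper w)
        have e1 : ⟪gradient h x, w - x⟫ = ⟪gradient h x, w⟫ - ⟪gradient h x, x⟫ :=
          inner_sub_right _ _ _
        have e2 : ⟪gradient h y, w - y⟫ = ⟪gradient h y, w⟫ - ⟪gradient h y, y⟫ :=
          inner_sub_right _ _ _
        have e3 : ⟪gradient h y - gradient h x, w⟫
            = ⟪gradient h y, w⟫ - ⟪gradient h x, w⟫ := inner_sub_left _ _ _
        rw [hc']; linarith
      set u : E := gradient h y - gradient h x with hu'
      have h2 := hlow (-(((|c| + 1) / ‖u‖ ^ 2) • u))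
      rw [inner_neg_right, real_inner_smul_right, real_inner_self_eq_norm_sq] at h2
      have h3 : (|c| + 1) / ‖u‖ ^ 2 * ‖u‖ ^ 2 = |c| + 1 := by field_simp
      have h4 : -|c| ≤ c := neg_abs_le c
      rw [h3] at h2
      have h5 : 0 ≤ |c| := abs_nonneg c
      linarith
    rw [hu0, ← hK0]
    simp
  · -- K > 0
    set u : E := gradient h y - gradient h x with hu'
    set w : E := y - K⁻¹ • u with hw
    have h1 : h x + ⟪gradient h x, w - x⟫ ≤ h w := hmin w
    have h2 : h w ≤ h y + ⟪gradient h y, w - y⟫ + K / 2 * ‖w - y‖ ^ 2 := hq y w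
    have e4 : w - y = -(K⁻¹ • u) := by rw [hw]; abel
    have einner : ⟪gradient h y, w - y⟫ = -(K⁻¹ * ⟪gradient h y, u⟫) := by
      rw [e4, inner_neg_right, real_inner_smul_right]
    have enorm : ‖w - y‖ ^ 2 = K⁻¹ ^ 2 * ‖u‖ ^ 2 := by
      rw [e4, norm_neg, norm_smul, Real.norm_eq_abs, abs_inv, abs_of_pos hKpos, mul_pow]
    have e5 : ⟪gradient h x, w - x⟫
        = ⟪gradient h x, y - x⟫ - K⁻¹ * ⟪gradient h x, u⟫ := by
      have : w - x = (y - x) - K⁻¹ • u := by rw [hw]; abel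
      rw [this, inner_sub_right, real_inner_smul_right]
    have e6 : ⟪gradient h y, u⟫ - ⟪gradient h x, u⟫ = ‖u‖ ^ 2 := by
      rw [← inner_sub_left, hu', real_inner_self_eq_norm_sq]
    have e7 : K / 2 * (K⁻¹ ^ 2 * ‖u‖ ^ 2) = K⁻¹ / 2 * ‖u‖ ^ 2 := by
      field_simp
    have e6' : K⁻¹ * ⟪gradient h y, u⟫ - K⁻¹ * ⟪gradient h x, u⟫ = K⁻¹ * ‖u‖ ^ 2 := by
      linear_combination K⁻¹ * e6
    have h8 : K⁻¹ / 2 * ‖u‖ ^ 2 ≤ h y - h x - ⟪gradient h x, y - x⟫ := by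
      rw [einner, enorm] at h2
      rw [e5] at h1
      linarith
    have h9 := mul_le_mul_of_nonneg_left h8 hK
    have e10 : K * (K⁻¹ / 2 * ‖u‖ ^ 2) = 1 / 2 * ‖u‖ ^ 2 := by
      field_simp
    linarith

theorem stmt_18 (d : ℕ) (μ L : ℝ) (hμ : 0 < μ) (hμL : μ ≤ L)
    (f : EuclideanSpace ℝ (Fin d) → ℝ) (hf : Differentiable ℝ f)
    (hsmooth : ∀ x y, ‖gradient f x - gradient f y‖ ≤ L * ‖x - y‖)
    (hsc : ConvexOn ℝ Set.univ (fun x => f x - μ / 2 * ‖x‖ ^ 2))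
    (yi yj gi gj : EuclideanSpace ℝ (Fin d)) (fi fj : ℝ)
    (hfi : f yi = fi) (hfj : f yj = fj)
    (hgi : gradient f yi = gi) (hgj : gradient f yj = gj) :
    0 ≤ (L - μ) * (fi - fj - ⟪gj, yi - yj⟫)
      - (1 / 2) * ‖gi - gj‖ ^ 2 - (μ * L / 2) * ‖yi - yj‖ ^ 2
      + μ * ⟪gi - gj, yi - yj⟫ := by
  subst hfi hfj hgi hgj
  have hL0 : 0 ≤ L := le_trans hμ.le hμL
  have hK : (0:ℝ) ≤ L - μ := by linarith
  have hgradh : ∀ z, HasGradientAt (fun x : EuclideanSpace ℝ (Fin d) => f x - μ / 2 * ‖x‖ ^ 2)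
      (gradient f z - μ • z) z := by
    intro z
    have h1 : HasFDerivAt f (InnerProductSpace.toDual ℝ _ (gradient f z)) z :=
      (hf z).hasGradientAt.hasFDerivAt
    have h2 : HasFDerivAt (fun x : EuclideanSpace ℝ (Fin d) => μ / 2 * ‖x‖ ^ 2)
        ((μ / 2) • (2 • (innerSL ℝ z))) z :=
      ((hasStrictFDerivAt_norm_sq z).hasFDerivAt).const_mul (μ / 2)
    rw [hasGradientAt_iff_hasFDerivAt]
    refine (h1.sub h2).congr_fderiv ?_
    ext w
    simp [inner_sub_left, real_inner_smul_left, InnerProductSpace.toDual_apply_apply]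
    ring
  have hg' : ∀ z, gradient (fun x : EuclideanSpace ℝ (Fin d) => f x - μ / 2 * ‖x‖ ^ 2) z
      = gradient f z - μ • z := fun z => (hgradh z).gradient
  have hdh : Differentiable ℝ (fun x : EuclideanSpace ℝ (Fin d) => f x - μ / 2 * ‖x‖ ^ 2) :=
    fun z => (hgradh z).differentiableAt
  have hq : ∀ z w : EuclideanSpace ℝ (Fin d),
      (fun x => f x - μ / 2 * ‖x‖ ^ 2) w ≤ (fun x => f x - μ / 2 * ‖x‖ ^ 2) z
        + ⟪gradient (fun x : EuclideanSpace ℝ (Fin d) => f x - μ / 2 * ‖x‖ ^ 2) z, w - z⟫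
        + (L - μ) / 2 * ‖w - z‖ ^ 2 := by
    intro z w
    have hd := descent' hf hL0 hsmooth z w
    have e1 : ‖w‖ ^ 2 = ‖z‖ ^ 2 + 2 * ⟪z, w - z⟫ + ‖w - z‖ ^ 2 := by
      have := norm_add_sq_real z (w - z)
      simpa using this
    rw [hg' z]
    have e2 : ⟪gradient f z - μ • z, w - z⟫
        = ⟪gradient f z, w - z⟫ - μ * ⟪z, w - z⟫ := by
      rw [inner_sub_left, real_inner_smul_left]
    have e1' : μ / 2 * ‖w‖ ^ 2 = μ / 2 * ‖z‖ ^ 2 + μ * ⟪z, w - z⟫ + μ / 2 * ‖w - z‖ ^ 2 := by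
      linear_combination (μ / 2) * e1
    simp only []
    rw [e2]
    linarith
  have key := coco hK hdh hsc hq yj yi
  rw [hg' yi, hg' yj] at key
  -- scalar expansions
  have e1 : ⟪gradient f yj - μ • yj, yi - yj⟫
      = ⟪gradient f yj, yi - yj⟫ - μ * ⟪yj, yi - yj⟫ := by
    rw [inner_sub_left, real_inner_smul_left]
  have en : ‖yi‖ ^ 2 = ‖yj‖ ^ 2 + 2 * ⟪yj, yi - yj⟫ + ‖yi - yj‖ ^ 2 := by
    have := norm_add_sq_real yj (yi - yj)
    simpa using this
  have eu : ‖(gradient f yi - μ • yi) - (gradient f yj - μ • yj)‖ ^ 2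
      = ‖gradient f yi - gradient f yj‖ ^ 2
        - 2 * μ * ⟪gradient f yi - gradient f yj, yi - yj⟫ + μ ^ 2 * ‖yi - yj‖ ^ 2 := by
    have h1 : (gradient f yi - μ • yi) - (gradient f yj - μ • yj)
        = (gradient f yi - gradient f yj) - μ • (yi - yj) := by
      rw [smul_sub]; abel
    rw [h1, norm_sub_sq_real, real_inner_smul_right, norm_smul]
    simp [abs_of_pos hμ]
    ring
  have E1 : (L - μ) * ((f yi - μ / 2 * ‖yi‖ ^ 2) - (f yj - μ / 2 * ‖yj‖ ^ 2)
        - ⟪gradient f yj - μ • yj, yi - yj⟫)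
      - 1 / 2 * ‖(gradient f yi - μ • yi) - (gradient f yj - μ • yj)‖ ^ 2
      = (L - μ) * (f yi - f yj - ⟪gradient f yj, yi - yj⟫)
        - (1 / 2) * ‖gradient f yi - gradient f yj‖ ^ 2
        - (μ * L / 2) * ‖yi - yj‖ ^ 2
        + μ * ⟪gradient f yi - gradient f yj, yi - yj⟫ := by
    linear_combination (-(L - μ)) * e1 + (-(L - μ) * μ / 2) * en + (-(1:ℝ)/2) * eu
  linarith [key, E1.le, E1.ge]
end
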